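/- Let $n \geq 2$, $c \in \mathbb{R}$, $\delta > 0$, and let $\mu_1,\dots,\mu_n < 0$ and $\lambda_1,\dots,\lambda_n > 0$ be real numbers. Assume that for every $k$, $-c + \sum_{i \neq k} \mu_i \geq \delta$, and that $-c + 2\sum_{i=1}^n \frac{\mu_i}{\lambda_i} - \sum_{i=1}^n \frac{\mu_i}{\lambda_i^2} \leq \frac{\delta}{2}$. Then for every $k$, $\lambda_k \leq \frac{-4\mu_k}{\delta}$. -/

import Mathlib

/-!
At the index `k`, the terms `μ i * (1 / λ i - 1) ^ 2` with `i ≠ k` and `μ k / λ k ^ 2` are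
all nonpositive. Expanding the squares, their sum is the left-hand side of the maximum-point
inequality plus the cone quantity `-c + ∑_{i ≠ k} μ i`, corrected by `2 μ k / λ k`; the two
hypotheses then force `δ / 2 + 2 μ k / λ k ≤ 0`, which is the claimed bound on `λ k`.
-/

open Finset

section

variable {ι : Type*} [Fintype ι] [DecidableEq ι]

theorem sum_erase_mul_inv_sub_one_sq_add (μ lam : ι → ℝ) (hlam : ∀ i, lam i ≠ 0) (k : ι) :
    ∑ i ∈ univ.erase k, μ i * (1 / lam i - 1) ^ 2 + μ k / lam k ^ 2 =
      ∑ i, μ i / lam i ^ 2 - 2 * ∑ i, μ i / lam i + ∑ i ∈ univ.erase k, μ i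
        + 2 * (μ k / lam k) := by
  have expand : ∀ i, μ i * (1 / lam i - 1) ^ 2 = μ i / lam i ^ 2 - 2 * (μ i / lam i) + μ i := by
    intro i
    field_simp [hlam i]
    ring
  rw [sum_congr rfl fun i _ => expand i, sum_add_distrib, sum_sub_distrib, ← mul_sum,
    sum_erase_eq_sub (mem_univ k), sum_erase_eq_sub (mem_univ k)]
  ring

theorem half_add_two_mul_div_nonpos_of_cone {c δ : ℝ} {μ lam : ι → ℝ}
    (hμ : ∀ i, μ i ≤ 0) (hlam : ∀ i, 0 < lam i) (k : ι)
    (hcone : δ ≤ -c + ∑ i ∈ univ.erase k, μ i)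
    (hmax : -c + 2 * ∑ i, μ i / lam i - ∑ i, μ i / lam i ^ 2 ≤ δ / 2) :
    δ / 2 + 2 * (μ k / lam k) ≤ 0 := by
  have hrest : ∑ i ∈ univ.erase k, μ i * (1 / lam i - 1) ^ 2 ≤ 0 :=
    sum_nonpos fun i _ => mul_nonpos_of_nonpos_of_nonneg (hμ i) (sq_nonneg _)
  have hk : μ k / lam k ^ 2 ≤ 0 := div_nonpos_of_nonpos_of_nonneg (hμ k) (sq_nonneg _)
  linarith [sum_erase_mul_inv_sub_one_sq_add μ lam (fun i => (hlam i).ne') k]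

end

theorem le_neg_four_mul_div_of_half_add_two_mul_div_nonpos {δ m l : ℝ} (hδ : 0 < δ) (hl : 0 < l)
    (h : δ / 2 + 2 * (m / l) ≤ 0) : l ≤ -4 * m / δ := by
  rw [le_div_iff₀ hδ]
  have : δ / 2 * l + 2 * m ≤ 0 := by
    simpa [add_mul, mul_assoc, div_mul_cancel₀ m hl.ne'] using mul_nonpos_of_nonpos_of_nonneg h hl.le
  linarith

theorem stmt_12_general (n : ℕ) (c δ : ℝ) (hδ : 0 < δ)
    (μ lam : Fin n → ℝ) (hμ : ∀ i, μ i < 0) (hlam : ∀ i, 0 < lam i)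
    (hcone : ∀ k : Fin n, δ ≤ -c + ∑ i ∈ Finset.univ.erase k, μ i)
    (hmax : -c + 2 * ∑ i, μ i / lam i - ∑ i, μ i / (lam i) ^ 2 ≤ δ / 2) :
    ∀ k, lam k ≤ -4 * μ k / δ := fun k =>
  le_neg_four_mul_div_of_half_add_two_mul_div_nonpos hδ (hlam k)
    (half_add_two_mul_div_nonpos_of_cone (fun i => (hμ i).le) hlam k (hcone k) hmax)

theorem stmt_12 (n : ℕ) (hn : 2 ≤ n) (c δ : ℝ) (hδ : 0 < δ)
    (μ lam : Fin n → ℝ) (hμ : ∀ i, μ i < 0) (hlam : ∀ i, 0 < lam i)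
    (hcone : ∀ k : Fin n, δ ≤ -c + ∑ i ∈ Finset.univ.erase k, μ i)
    (hmax : -c + 2 * ∑ i, μ i / lam i - ∑ i, μ i / (lam i) ^ 2 ≤ δ / 2) :
    ∀ k, lam k ≤ -4 * μ k / δ :=
  stmt_12_general n c δ hδ μ lam hμ hlam hcone hmax
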